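/- Assume (i0,j0) ∈ D and that for every s ∈ S that is below j0 one has (i0,s) ∈ D. Then det Σ[S ∪ {i0}, S ∪ {i0}] lies in the ideal of R generated by the partial derivatives {∂f/∂X_e : e ∈ D}. -/

import Mathlib

open MvPolynomial Matrix

noncomputable section

/-- The matrix of variables of the DAG with edge set `D`. -/
def edgeMatrix (n : ℕ) (D : Finset (Fin n × Fin n)) :
    Matrix (Fin n) (Fin n) (MvPolynomial {e // e ∈ D} ℝ) :=
  Matrix.of fun i j => if h : (i, j) ∈ D then X ⟨(i, j), h⟩ else 0

/-- `Σ = (I - A)⁻ᵀ (I - A)⁻¹` over the polynomial ring. -/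
def sigmaMat (n : ℕ) (D : Finset (Fin n × Fin n)) :
    Matrix (Fin n) (Fin n) (MvPolynomial {e // e ∈ D} ℝ) :=
  ((1 - edgeMatrix n D)ᵀ)⁻¹ * (1 - edgeMatrix n D)⁻¹

/-- `det M[I,J]`, rows and columns in increasing order. -/
def subdet {α : Type*} [CommRing α] {n : ℕ} (M : Matrix (Fin n) (Fin n) α)
    (I J : Finset (Fin n)) : α :=
  if h : I.card = J.card then
    (M.submatrix (fun p : Fin I.card => ((I.orderIsoOfFin rfl) p : Fin n))
      (fun p : Fin I.card => ((J.orderIsoOfFin h.symm) p : Fin n))).det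
  else 0

/-- `f = det Σ[S ∪ {i0}, S ∪ {j0}]`. -/
def fpoly (n : ℕ) (D : Finset (Fin n × Fin n)) (i0 j0 : Fin n) (S : Finset (Fin n)) :
    MvPolynomial {e // e ∈ D} ℝ :=
  subdet (sigmaMat n D) (insert i0 S) (insert j0 S)

/-- `t` is below `v`: there is a directed path of length ≥ 1 from `v` to `t`. -/
def Below {n : ℕ} (D : Finset (Fin n × Fin n)) (v t : Fin n) : Prop :=
  Relation.TransGen (fun i j => (i, j) ∈ D) v t

end

/-!
Write `B = (1 - A)⁻¹`, so that `Σ = Bᵀ B`, and let `s` be the column `i0` of `Σ`. Differentiating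
`B (1 - A) = 1` gives `∂B/∂X_{i0 v} = B e_{i0} e_vᵀ B`, hence `∂Σ/∂X_{i0 v} = b sᵀ + s bᵀ` where
`b` is the row `v` of `B`. Thus `∂f/∂X_{i0 v} = L(B_v)` for the linear form `L` sending `u` to the
derivative of `det` at `Σ[I, J]` in the direction `(u sᵀ + s uᵀ)[I, J]`.

The rows of `B` satisfy `B_v = e_v + ∑ₓ A_{vx} B_x`, and `L(e_v) = 0` unless `v ∈ I ∪ J`. For `v`
below `j0`, either `i0 → v` and `L(B_v)` is a partial derivative of `f`, or `v ∉ I ∪ J` and the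
recursion expresses `L(B_v)` through the successors of `v`; descending along the DAG, all these
`L(B_v)` lie in the ideal. Then so does `L(e_{j0}) = L(B_{j0}) - ∑ₓ A_{j0 x} L(B_x)`, which is the
determinant of `Σ[I, J]` with column `j0` replaced by column `i0`, i.e. `± det Σ[I, I]`.
-/

section DerivationMatrix

variable {R A : Type*} [CommSemiring R] [CommRing A] [Algebra R A] (d : Derivation R A A)

theorem Derivation.map_finset_prod {ι : Type*} [DecidableEq ι] (s : Finset ι) (f : ι → A) :
    d (∏ i ∈ s, f i) = ∑ j ∈ s, d (f j) * ∏ i ∈ s.erase j, f i := by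
  induction s using Finset.induction_on with
  | empty => simp
  | insert a s ha ih =>
    rw [Finset.prod_insert ha, d.leibniz, ih, Finset.sum_insert ha, Finset.erase_insert ha,
      smul_eq_mul, smul_eq_mul, Finset.mul_sum, add_comm]
    congr 1
    · exact mul_comm _ _
    refine Finset.sum_congr rfl fun j hj => ?_
    rw [Finset.erase_insert_of_ne (by rintro rfl; exact ha hj),
      Finset.prod_insert (fun h => ha (Finset.mem_of_mem_erase h))]
    ring

theorem Derivation.map_prod_univ {ι : Type*} [Fintype ι] [DecidableEq ι] (f : ι → A) :
    d (∏ i, f i) = ∑ j, ∏ i, Function.update f j (d (f j)) i := by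
  simp_rw [d.map_finset_prod, Finset.prod_update_of_mem (Finset.mem_univ _),
    Finset.sdiff_singleton_eq_erase]

variable {m : Type*}

theorem Derivation.map_matrix_one [DecidableEq m] : (1 : Matrix m m A).map d = 0 := by
  ext i j
  rcases eq_or_ne i j with rfl | h
  · simp
  · simp [one_apply_ne h]

variable [Fintype m]

theorem Derivation.map_matrix_mul {l n : Type*} (M : Matrix l m A) (N : Matrix m n A) :
    (M * N).map d = M.map d * N + M * N.map d := by
  ext i k
  simp only [map_apply, mul_apply, Matrix.add_apply, map_sum, d.leibniz, smul_eq_mul]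
  rw [← Finset.sum_add_distrib]
  exact Finset.sum_congr rfl fun j _ => by ring

variable [DecidableEq m]

def Matrix.detDeriv (M : Matrix m m A) : Matrix m m A →ₗ[A] A where
  toFun N := ∑ j, (M.updateCol j (Nᵀ j)).det
  map_add' N N' := by
    simp only [← Finset.sum_add_distrib, ← det_updateCol_add]
    rfl
  map_smul' a N := by
    simp only [smul_eq_mul, RingHom.id_apply, Finset.mul_sum, ← det_updateCol_smul]
    rfl

theorem Matrix.detDeriv_apply (M N : Matrix m m A) :
    M.detDeriv N = ∑ j, (M.updateCol j (Nᵀ j)).det := rfl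

theorem Matrix.detDeriv_updateCol_zero (M : Matrix m m A) (p : m) (v : m → A) :
    M.detDeriv ((0 : Matrix m m A).updateCol p v) = (M.updateCol p v).det := by
  rw [detDeriv_apply, Finset.sum_eq_single p]
  · congr 2
    ext i
    simp
  · intro j _ hj
    refine det_eq_zero_of_column_eq_zero j fun i => ?_
    simp [updateCol_ne hj]
  · simp

theorem Derivation.map_det (M : Matrix m m A) : d M.det = M.detDeriv (M.map d) := by
  have hcol : ∀ (σ : Equiv.Perm m) (j : m), ∏ i, (M.updateCol j ((M.map d)ᵀ j)) (σ i) i =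
      ∏ i, Function.update (fun i => M (σ i) i) j (d (M (σ j) j)) i := by
    intro σ j
    refine Finset.prod_congr rfl fun i _ => ?_
    rw [updateCol_apply, Function.update_apply]
    split_ifs with h
    · subst h; rfl
    · rfl
  simp_rw [detDeriv_apply, det_apply, map_sum, hcol, Derivation.map_smul_of_tower,
    d.map_prod_univ, Finset.smul_sum]
  exact Finset.sum_comm

theorem Derivation.map_nonsing_inv (Λ : Matrix m m A) (h : IsUnit Λ.det) :
    Λ⁻¹.map d = -(Λ⁻¹ * Λ.map d * Λ⁻¹) := by
  have hprod : Λ⁻¹.map d * Λ = -(Λ⁻¹ * Λ.map d) := by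
    rw [eq_neg_iff_add_eq_zero, ← d.map_matrix_mul, nonsing_inv_mul Λ h, d.map_matrix_one]
  calc Λ⁻¹.map d = Λ⁻¹.map d * Λ * Λ⁻¹ := by
        rw [Matrix.mul_assoc, mul_nonsing_inv Λ h, mul_one]
    _ = -(Λ⁻¹ * Λ.map d * Λ⁻¹) := by rw [hprod, neg_mul]

end DerivationMatrix

section SubmatrixDet

theorem Function.Injective.exists_equiv_apply_eq {ι ι' X : Type*} {f : ι → X} {g : ι' → X}
    (hf : f.Injective) (hg : g.Injective) (h : Set.range f = Set.range g) :
    ∃ e : ι ≃ ι', ∀ i, g (e i) = f i :=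
  ⟨(Equiv.ofInjective f hf).trans ((Equiv.setCongr h).trans (Equiv.ofInjective g hg).symm),
    fun _ => Equiv.apply_ofInjective_symm hg _⟩

variable {A : Type*} [CommRing A]

theorem Matrix.exists_det_submatrix_eq_units_smul {α ι ι' : Type*} [Fintype ι] [DecidableEq ι]
    [Fintype ι'] [DecidableEq ι'] (M : Matrix α α A) {r c : ι → α} {r' c' : ι' → α}
    (hr : r.Injective) (hc : c.Injective) (hr' : r'.Injective) (hc' : c'.Injective)
    (hrr' : Set.range r = Set.range r') (hcc' : Set.range c = Set.range c') :
    ∃ ε : ℤˣ, (M.submatrix r c).det = ε • (M.submatrix r' c').det := by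
  obtain ⟨er, her⟩ := hr.exists_equiv_apply_eq hr' hrr'
  obtain ⟨ec, hec⟩ := hc.exists_equiv_apply_eq hc' hcc'
  have hsub : M.submatrix r c =
      ((M.submatrix r' c').submatrix er er).submatrix id (ec.trans er.symm) := by
    ext i j
    simp [her, hec]
  refine ⟨Equiv.Perm.sign (ec.trans er.symm), ?_⟩
  rw [hsub, det_permute', det_submatrix_equiv_self, Units.smul_def, zsmul_eq_mul]

theorem exists_subdet_eq_units_smul {n : ℕ} {ι : Type*} [Fintype ι] [DecidableEq ι]
    (M : Matrix (Fin n) (Fin n) A) {I J : Finset (Fin n)} {r c : ι → Fin n}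
    (hr : r.Injective) (hc : c.Injective) (hrI : Set.range r = I) (hcJ : Set.range c = J) :
    ∃ ε : ℤˣ, subdet M I J = ε • (M.submatrix r c).det := by
  have card_eq {K : Finset (Fin n)} {f : ι → Fin n} (hf : f.Injective)
      (hfK : Set.range f = K) : K.card = Fintype.card ι := by
    have himage : Finset.univ.image f = K := Finset.coe_inj.mp (by simp [hfK])
    rw [← himage, Finset.card_image_of_injective _ hf, Finset.card_univ]
  have hIJ : I.card = J.card := (card_eq hr hrI).trans (card_eq hc hcJ).symm
  have enum_range {K : Finset (Fin n)} {k : ℕ} (h : K.card = k) :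
      Set.range (fun p : Fin k => ((K.orderIsoOfFin h) p : Fin n)) = K := by
    simp_rw [Finset.coe_orderIsoOfFin_apply, Finset.range_orderEmbOfFin]
  obtain ⟨ε, hε⟩ := M.exists_det_submatrix_eq_units_smul
    (fun _ _ h => (I.orderIsoOfFin rfl).injective (Subtype.ext h))
    (fun _ _ h => (J.orderIsoOfFin hIJ.symm).injective (Subtype.ext h)) hr hc
    ((enum_range rfl).trans hrI.symm) ((enum_range hIJ.symm).trans hcJ.symm)
  exact ⟨ε, by rw [subdet, dif_pos hIJ, hε]⟩

end SubmatrixDet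

section Propagation

variable {n : ℕ} {D : Finset (Fin n × Fin n)}

theorem Below.lt (hD : ∀ e ∈ D, e.1 < e.2) {v t : Fin n} (h : Below D v t) : v < t := by
  induction h with
  | single h => exact hD _ h
  | tail _ h ih => exact ih.trans (hD _ h)

variable {R : Type*} [CommRing R] {I : Ideal R} {A : Matrix (Fin n) (Fin n) R} {ψ φ : Fin n → R}

theorem forall_below_mem (hD : ∀ e ∈ D, e.1 < e.2) (hA : ∀ v x, (v, x) ∉ D → A v x = 0)
    (hψ : ∀ v, ψ v = φ v + ∑ x, A v x * ψ x) {j : Fin n}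
    (h : ∀ v, Below D j v → ψ v ∈ I ∨ φ v = 0) : ∀ v, Below D j v → ψ v ∈ I := by
  intro v
  induction v using WellFoundedGT.induction with
  | _ v ih =>
    intro hv
    refine (h v hv).elim id fun hφ => ?_
    rw [hψ v, hφ, zero_add]
    refine Ideal.sum_mem _ fun x _ => ?_
    by_cases hx : (v, x) ∈ D
    · exact I.mul_mem_left _ (ih x (hD _ hx) (hv.tail hx))
    · rw [hA v x hx, zero_mul]
      exact I.zero_mem

theorem mem_of_forall_below (hD : ∀ e ∈ D, e.1 < e.2) (hA : ∀ v x, (v, x) ∉ D → A v x = 0)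
    (hψ : ∀ v, ψ v = φ v + ∑ x, A v x * ψ x) {j : Fin n} (hj : ψ j ∈ I)
    (h : ∀ v, Below D j v → ψ v ∈ I ∨ φ v = 0) : φ j ∈ I := by
  have hbelow := forall_below_mem hD hA hψ h
  rw [eq_sub_of_add_eq (hψ j).symm]
  refine I.sub_mem hj (Ideal.sum_mem _ fun x _ => ?_)
  by_cases hx : (j, x) ∈ D
  · exact I.mul_mem_left _ (hbelow x (.single hx))
  · rw [hA j x hx, zero_mul]
    exact I.zero_mem

end Propagation

section EdgeMatrix

variable {n : ℕ} {D : Finset (Fin n × Fin n)}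

theorem edgeMatrix_apply_of_notMem {i j : Fin n} (h : (i, j) ∉ D) : edgeMatrix n D i j = 0 := by
  simp [edgeMatrix, h]

theorem det_one_sub_edgeMatrix (hD : ∀ e ∈ D, e.1 < e.2) : (1 - edgeMatrix n D).det = 1 := by
  have hlower {i j : Fin n} (h : ¬ i < j) : edgeMatrix n D i j = 0 :=
    edgeMatrix_apply_of_notMem fun hm => h (hD _ hm)
  rw [det_of_isUpperTriangular fun i j (hji : j < i) => by
    rw [Matrix.sub_apply, one_apply_ne (ne_of_gt hji), hlower (lt_asymm hji), sub_zero]]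
  simp [hlower (lt_irrefl _)]

/-- `(1 - A)⁻¹ = ∑ₖ Aᵏ`: its `(a, b)` entry sums the monomials of all paths
from `a` to `b`. -/
noncomputable def pathMatrix (n : ℕ) (D : Finset (Fin n × Fin n)) :
    Matrix (Fin n) (Fin n) (MvPolynomial {e // e ∈ D} ℝ) :=
  (1 - edgeMatrix n D)⁻¹

theorem pathMatrix_eq_one_add (hD : ∀ e ∈ D, e.1 < e.2) :
    pathMatrix n D = 1 + edgeMatrix n D * pathMatrix n D := by
  have h := mul_nonsing_inv (1 - edgeMatrix n D) (det_one_sub_edgeMatrix hD ▸ isUnit_one)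
  rw [sub_mul, one_mul, sub_eq_iff_eq_add] at h
  exact h

theorem sigmaMat_eq : sigmaMat n D = (pathMatrix n D)ᵀ * pathMatrix n D := by
  rw [sigmaMat, pathMatrix, transpose_nonsing_inv]

theorem map_pderiv_one_sub_edgeMatrix (e : {e // e ∈ D}) :
    (1 - edgeMatrix n D).map (pderiv e) = -single e.1.1 e.1.2 1 := by
  classical
  refine Matrix.ext fun i j => ?_
  have hone :
      pderiv e ((1 : Matrix (Fin n) (Fin n) (MvPolynomial {e // e ∈ D} ℝ)) i j) = 0 := by
    rcases eq_or_ne i j with rfl | h <;> simp [one_apply_ne, *]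
  by_cases hm : (i, j) ∈ D
  · simp [edgeMatrix, hm, hone, single_apply, pderiv_X, Pi.single_apply, Subtype.ext_iff,
      Prod.ext_iff, eq_comm]
  · simp only [edgeMatrix, hm, hone, single_apply, of_apply, map_apply, Matrix.sub_apply,
      Matrix.neg_apply, dif_neg, not_false_eq_true, sub_zero]
    rw [if_neg (by rintro ⟨rfl, rfl⟩; exact hm e.2), neg_zero]

theorem map_pderiv_pathMatrix (hD : ∀ e ∈ D, e.1 < e.2) (e : {e // e ∈ D}) :
    (pathMatrix n D).map (pderiv e) =
      vecMulVec (fun a => pathMatrix n D a e.1.1) (pathMatrix n D e.1.2) := by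
  rw [pathMatrix, Derivation.map_nonsing_inv _ _ (det_one_sub_edgeMatrix hD ▸ isUnit_one),
    map_pderiv_one_sub_edgeMatrix, single_eq_single_vecMulVec_single, Matrix.mul_neg, neg_mul,
    neg_neg, mul_vecMulVec, vecMulVec_mul, mulVec_single_one, single_one_vecMul]
  rfl

theorem map_pderiv_sigmaMat (hD : ∀ e ∈ D, e.1 < e.2) (e : {e // e ∈ D}) :
    (sigmaMat n D).map (pderiv e) =
      vecMulVec (pathMatrix n D e.1.2) (fun a => sigmaMat n D a e.1.1) +
        vecMulVec (fun a => sigmaMat n D a e.1.1) (pathMatrix n D e.1.2) := by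
  have hcol : (fun a => sigmaMat n D a e.1.1) =
      (fun a => pathMatrix n D a e.1.1) ᵥ* pathMatrix n D := by
    ext a
    simp [sigmaMat_eq, mul_apply, vecMul, dotProduct, mul_comm]
  rw [hcol, sigmaMat_eq, Derivation.map_matrix_mul, transpose_map, map_pderiv_pathMatrix hD,
    transpose_vecMulVec, vecMulVec_mul, mul_vecMulVec, mulVec_transpose]

end EdgeMatrix

section SymmOuter

variable {A α ι : Type*} [CommRing A]

def symmOuterSubmatrix (s : α → A) (r c : ι → α) : (α → A) →ₗ[A] Matrix ι ι A where
  toFun u := (vecMulVec u s + vecMulVec s u).submatrix r c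
  map_add' u u' := by
    ext i j
    simp only [submatrix_apply, Matrix.add_apply, vecMulVec_apply, Pi.add_apply]
    ring
  map_smul' a u := by
    ext i j
    simp only [submatrix_apply, Matrix.add_apply, vecMulVec_apply, Pi.smul_apply, smul_eq_mul,
      RingHom.id_apply, Matrix.smul_apply]
    ring

variable [DecidableEq α] (s : α → A) {r c : ι → α} {x : α}

theorem symmOuterSubmatrix_single_of_notMem (hr : x ∉ Set.range r) (hc : x ∉ Set.range c) :
    symmOuterSubmatrix s r c (Pi.single x 1) = 0 := by
  ext i j
  have hri : r i ≠ x := fun h => hr ⟨i, h⟩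
  have hcj : c j ≠ x := fun h => hc ⟨j, h⟩
  simp [symmOuterSubmatrix, vecMulVec_apply, hri, hcj]

theorem symmOuterSubmatrix_single_eq_updateCol [DecidableEq ι] (hr : x ∉ Set.range r)
    (hc : c.Injective) {p : ι} (hp : c p = x) :
    symmOuterSubmatrix s r c (Pi.single x 1) = (0 : Matrix ι ι A).updateCol p (s ∘ r) := by
  ext i j
  have hri : r i ≠ x := fun h => hr ⟨i, h⟩
  rcases eq_or_ne j p with rfl | hj
  · simp [symmOuterSubmatrix, vecMulVec_apply, hri, hp]
  · have hcj : c j ≠ x := hp ▸ hc.ne hj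
    simp [symmOuterSubmatrix, vecMulVec_apply, hri, hcj, updateCol_ne hj]

end SymmOuter

section Main

theorem MvPolynomial.span_range_pderiv_zsmul_le {σ R : Type*} [CommRing R] (a : ℤ)
    (f : MvPolynomial σ R) :
    Ideal.span (Set.range fun i => pderiv i (a • f)) ≤
      Ideal.span (Set.range fun i => pderiv i f) :=
  Ideal.span_le.2 <| by
    rintro _ ⟨i, rfl⟩
    simp only [SetLike.mem_coe, map_zsmul]
    exact zsmul_mem (Ideal.subset_span (Set.mem_range_self i)) a

variable {n : ℕ} {D : Finset (Fin n × Fin n)}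

theorem pderiv_det_submatrix_sigmaMat (hD : ∀ e ∈ D, e.1 < e.2) {ι : Type*} [Fintype ι]
    [DecidableEq ι] (r c : ι → Fin n) {i v : Fin n} (h : (i, v) ∈ D) :
    pderiv ⟨(i, v), h⟩ ((sigmaMat n D).submatrix r c).det =
      ((sigmaMat n D).submatrix r c).detDeriv
        (symmOuterSubmatrix (fun a => sigmaMat n D a i) r c (pathMatrix n D v)) := by
  rw [Derivation.map_det, ← submatrix_map, map_pderiv_sigmaMat hD]
  rfl

theorem map_pathMatrix_row (hD : ∀ e ∈ D, e.1 < e.2)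
    (L : (Fin n → MvPolynomial {e // e ∈ D} ℝ) →ₗ[MvPolynomial {e // e ∈ D} ℝ]
      MvPolynomial {e // e ∈ D} ℝ) (v : Fin n) :
    L (pathMatrix n D v) =
      L (Pi.single v 1) + ∑ x, edgeMatrix n D v x * L (pathMatrix n D x) := by
  have hrow :
      pathMatrix n D v = Pi.single v 1 + ∑ x, edgeMatrix n D v x • pathMatrix n D x := by
    conv_lhs => rw [pathMatrix_eq_one_add hD]
    ext c
    simp [mul_apply, one_apply, Pi.single_apply, eq_comm]
  rw [hrow, map_add, map_sum]
  simp_rw [map_smul, smul_eq_mul]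

/- Listing `i0` and `j0` in the same slot of `I` and `J` makes the column replacement turn
`Σ[I, J]` into `Σ[I, I]` on the nose. -/
theorem det_submatrix_cons_mem_span_pderiv (hD : ∀ e ∈ D, e.1 < e.2) {i0 j0 : Fin n}
    (hedge : (i0, j0) ∈ D) {k : ℕ} {e : Fin k → Fin n} (he : e.Injective)
    (hj0 : j0 ∉ Set.range e)
    (hbelow : ∀ s ∈ Set.range e, Below D j0 s → (i0, s) ∈ D) :
    ((sigmaMat n D).submatrix (Fin.cons i0 e) (Fin.cons i0 e)).det ∈
      Ideal.span (Set.range fun x : {e // e ∈ D} =>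
        pderiv x ((sigmaMat n D).submatrix (Fin.cons i0 e) (Fin.cons j0 e)).det) := by
  set r : Fin (k + 1) → Fin n := Fin.cons i0 e
  set c : Fin (k + 1) → Fin n := Fin.cons j0 e
  set M := (sigmaMat n D).submatrix r c
  set Idl := Ideal.span (Set.range fun x : {e // e ∈ D} => pderiv x M.det)
  have hi0j0 : i0 < j0 := hD _ hedge
  have hc : c.Injective := Fin.cons_injective_of_injective hj0 he
  let L := M.detDeriv ∘ₗ symmOuterSubmatrix (fun a => sigmaMat n D a i0) r c
  have hL {v : Fin n} (hv : (i0, v) ∈ D) : L (pathMatrix n D v) ∈ Idl := by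
    rw [LinearMap.comp_apply, ← pderiv_det_submatrix_sigmaMat hD r c hv]
    exact Ideal.subset_span ⟨_, rfl⟩
  have hj0r : j0 ∉ Set.range r := by
    simp only [r, Fin.range_cons, Set.mem_insert_iff, not_or]
    exact ⟨hi0j0.ne', hj0⟩
  have hLj0 : L (Pi.single j0 1) = ((sigmaMat n D).submatrix r r).det := by
    rw [LinearMap.comp_apply, symmOuterSubmatrix_single_eq_updateCol _ hj0r hc (p := 0) rfl,
      detDeriv_updateCol_zero]
    congr 1
    ext i j
    cases j using Fin.cases <;> simp [M, r, c]
  rw [← hLj0]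
  refine mem_of_forall_below hD (fun v x => edgeMatrix_apply_of_notMem)
    (map_pathMatrix_row hD L) (hL hedge) fun v hv => ?_
  by_cases hi0v : (i0, v) ∈ D
  · exact .inl (hL hi0v)
  right
  have hj0v : j0 < v := hv.lt hD
  have hve : v ∉ Set.range e := fun hs => hi0v (hbelow v hs hv)
  rw [LinearMap.comp_apply, symmOuterSubmatrix_single_of_notMem, map_zero]
  · simp only [r, Fin.range_cons, Set.mem_insert_iff, not_or]
    exact ⟨(hi0j0.trans hj0v).ne', hve⟩
  · simp only [c, Fin.range_cons, Set.mem_insert_iff, not_or]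
    exact ⟨hj0v.ne', hve⟩

end Main

theorem statement11_general (n : ℕ) (D : Finset (Fin n × Fin n)) (hD : ∀ e ∈ D, e.1 < e.2)
    (i0 j0 : Fin n) (S : Finset (Fin n)) (hi0S : i0 ∉ S) (hj0S : j0 ∉ S)
    (hedge : (i0, j0) ∈ D) (hbelow : ∀ s ∈ S, Below D j0 s → (i0, s) ∈ D) :
    subdet (sigmaMat n D) (insert i0 S) (insert i0 S) ∈
      Ideal.span (Set.range fun e : {e // e ∈ D} => MvPolynomial.pderiv e (fpoly n D i0 j0 S)) := by
  set e := S.orderEmbOfFin rfl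
  have he : Set.range e = S := S.range_orderEmbOfFin rfl
  have hcons {x : Fin n} (hx : x ∉ S) :
      (Fin.cons x e : Fin (S.card + 1) → Fin n).Injective ∧
        Set.range (Fin.cons x e : Fin (S.card + 1) → Fin n) = ↑(insert x S) := by
    refine ⟨Fin.cons_injective_of_injective (he ▸ hx) e.injective, ?_⟩
    rw [Fin.range_cons, he, Finset.coe_insert]
  obtain ⟨ε, hf⟩ := exists_subdet_eq_units_smul (sigmaMat n D) (hcons hi0S).1 (hcons hj0S).1
    (hcons hi0S).2 (hcons hj0S).2
  obtain ⟨ε', hg⟩ := exists_subdet_eq_units_smul (sigmaMat n D) (hcons hi0S).1 (hcons hi0S).1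
    (hcons hi0S).2 (hcons hi0S).2
  have hf' : ((sigmaMat n D).submatrix (Fin.cons i0 e) (Fin.cons j0 e)).det =
      (ε : ℤ) • fpoly n D i0 j0 S := by
    rw [fpoly, hf, ← Units.smul_def, smul_smul, Int.units_mul_self, one_smul]
  rw [hg]
  refine zsmul_mem (MvPolynomial.span_range_pderiv_zsmul_le (ε : ℤ) _ ?_) _
  rw [← hf']
  exact det_submatrix_cons_mem_span_pderiv hD hedge e.injective (he ▸ hj0S)
    fun s hs => hbelow s (by rwa [← Finset.mem_coe, ← he])

/-- If `i0 → j0` and `i0 → s` for every `s ∈ S` below `j0`, then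
`det Σ[S ∪ {i0}, S ∪ {i0}]` lies in the ideal generated by the partial derivatives of `f`. -/
theorem statement11 (n : ℕ) (D : Finset (Fin n × Fin n)) (hD : ∀ e ∈ D, e.1 < e.2)
    (i0 j0 : Fin n) (hne : i0 ≠ j0) (S : Finset (Fin n)) (hi0S : i0 ∉ S) (hj0S : j0 ∉ S)
    (hedge : (i0, j0) ∈ D) (hbelow : ∀ s ∈ S, Below D j0 s → (i0, s) ∈ D) :
    subdet (sigmaMat n D) (insert i0 S) (insert i0 S) ∈
      Ideal.span (Set.range fun e : {e // e ∈ D} => MvPolynomial.pderiv e (fpoly n D i0 j0 S)) :=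
  statement11_general n D hD i0 j0 S hi0S hj0S hedge hbelow
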